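/- arXiv:2301.09471 — 4 statements merged into one kernel-verified Lean document; each statement's English description precedes it below -/
import Mathlib

section
/- Let U : ℝ^d → ℝ be a C² convex function and for α ≥ 0 define U_α(x) = U(x) + (α/2)|x|². Let π ∝ e^{-U} dλ and π_α ∝ e^{-U_α} dλ be the associated Gibbs probability measures. Then the Kullback–Leibler divergence satisfies D_KL(π | π_α) ≤ (α²/8) · E_π[|x|⁴]. -/
/-!
Put `t(x) = (α/2)|x|²`. Since `e^{-U_α} = e^{-U} e^{-t}`, we have `Z_α/Z = E_π[e^{-t}]`, so
`D_KL(π|π_α) = log E_π[e^{-t}] + E_π[t]`. Now `log y ≤ y - 1` and `e^{-t} ≤ 1 - t + t²/2` for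
`t ≥ 0` bound this by `E_π[t²/2] = (α²/8) E_π[|x|⁴]`.
-/

open MeasureTheory Real

/-- From `e^t ≥ 1 + t + t²/2` and `(1 + t + t²/2)(1 - t + t²/2) = 1 + t⁴/4 ≥ 1`. -/
lemma Real.exp_neg_le_one_sub_add_sq_div_two {t : ℝ} (ht : 0 ≤ t) :
    exp (-t) ≤ 1 - t + t ^ 2 / 2 := by
  have hq := quadratic_le_exp_of_nonneg ht
  have hp : 0 ≤ 1 - t + t ^ 2 / 2 := by nlinarith [sq_nonneg (t - 1)]
  rw [exp_neg, inv_le_iff_one_le_mul₀ (exp_pos t)]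
  nlinarith [mul_le_mul_of_nonneg_right hq hp, pow_nonneg ht 4]

noncomputable def gibbsMeasure {X : Type*} [MeasurableSpace X] (μ : Measure X) (V : X → ℝ) :
    Measure X :=
  (ENNReal.ofReal (∫ x, exp (-V x) ∂μ))⁻¹ • μ.withDensity fun x => ENNReal.ofReal (exp (-V x))

section
variable {X : Type*} [MeasurableSpace X] {μ : Measure X}

lemma log_integral_exp_neg_add_integral_le [IsProbabilityMeasure μ] {f : X → ℝ}
    (hf_nonneg : ∀ x, 0 ≤ f x) (hf : MemLp f 2 μ) :
    log (∫ x, exp (-f x) ∂μ) + ∫ x, f x ∂μ ≤ ∫ x, f x ^ 2 / 2 ∂μ := by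
  have hf_int : Integrable f μ := hf.integrable one_le_two
  have hf_sq : Integrable (fun x => f x ^ 2) μ := hf.integrable_sq
  have hexp_int : Integrable (fun x => exp (-f x)) μ := by
    refine (integrable_const (1 : ℝ)).mono' (continuous_exp.comp_aestronglyMeasurable hf.1.neg)
      (ae_of_all _ fun x => ?_)
    rw [norm_of_nonneg (exp_pos _).le, exp_le_one_iff, neg_nonpos]
    exact hf_nonneg x
  have hlin_int : Integrable (fun x => 1 - f x) μ := (integrable_const 1).sub hf_int
  have hquad_int : Integrable (fun x => 1 - f x + f x ^ 2 / 2) μ :=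
    hlin_int.add (hf_sq.div_const 2)
  calc log (∫ x, exp (-f x) ∂μ) + ∫ x, f x ∂μ
      ≤ (∫ x, exp (-f x) ∂μ) - 1 + ∫ x, f x ∂μ := by
        gcongr
        exact log_le_sub_one_of_pos (integral_exp_pos hexp_int)
    _ ≤ (∫ x, (1 - f x + f x ^ 2 / 2) ∂μ) - 1 + ∫ x, f x ∂μ := by
        gcongr ?_ - 1 + _
        exact integral_mono hexp_int hquad_int fun x =>
          exp_neg_le_one_sub_add_sq_div_two (hf_nonneg x)
    _ = ∫ x, f x ^ 2 / 2 ∂μ := by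
        rw [integral_add hlin_int (hf_sq.div_const 2), integral_sub (integrable_const 1) hf_int,
          integral_const, probReal_univ, one_smul]
        ring

variable {V : X → ℝ}

lemma isProbabilityMeasure_gibbsMeasure [NeZero μ] (hV : Integrable (fun x => exp (-V x)) μ) :
    IsProbabilityMeasure (gibbsMeasure μ V) := by
  have hZ : 0 < ∫ x, exp (-V x) ∂μ := integral_exp_pos hV
  constructor
  rw [gibbsMeasure, Measure.smul_apply, withDensity_apply _ MeasurableSet.univ, setLIntegral_univ,
    ← ofReal_integral_eq_lintegral_ofReal hV (ae_of_all _ fun x => (exp_pos _).le), smul_eq_mul]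
  exact ENNReal.inv_mul_cancel (by simpa using hZ) ENNReal.ofReal_ne_top

lemma integral_gibbsMeasure (hV : AEMeasurable (fun x => exp (-V x)) μ) (g : X → ℝ) :
    ∫ x, g x ∂gibbsMeasure μ V = (∫ x, exp (-V x) ∂μ)⁻¹ * ∫ x, exp (-V x) * g x ∂μ := by
  rw [gibbsMeasure, integral_smul_measure, integral_withDensity_eq_integral_toReal_smul₀
    hV.ennreal_ofReal (ae_of_all _ fun _ => ENNReal.ofReal_lt_top)]
  simp only [ENNReal.toReal_inv, smul_eq_mul, ENNReal.toReal_ofReal (exp_pos _).le,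
    ENNReal.toReal_ofReal (integral_nonneg fun x => (exp_pos (-V x)).le)]

end

/-- Here `dπ/dπ_α(x) = (Z_α/Z)·exp((α/2)|x|²)`, so the left-hand side is `D_KL(π|π_α)`. -/
theorem kl_penalized_gibbs_le_general
    (d : ℕ) (U : EuclideanSpace ℝ (Fin d) → ℝ)
    (α : ℝ) (hα : 0 ≤ α)
    (Z Zα : ℝ)
    (hZ : Z = ∫ x, Real.exp (-U x))
    (hZα : Zα = ∫ x, Real.exp (-(U x + α / 2 * ‖x‖ ^ 2)))
    (hZint : Integrable (fun x => Real.exp (-U x)))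
    (gibbs : Measure (EuclideanSpace ℝ (Fin d)))
    (hgibbs : gibbs = (ENNReal.ofReal Z)⁻¹ •
      (volume.withDensity fun x => ENNReal.ofReal (Real.exp (-U x))))
    (hm4 : Integrable (fun x => ‖x‖ ^ 4) gibbs) :
    ∫ x, (Real.log (Zα / Z) + α / 2 * ‖x‖ ^ 2) ∂gibbs ≤ α ^ 2 / 8 * ∫ x, ‖x‖ ^ 4 ∂gibbs := by
  replace hgibbs : gibbs = gibbsMeasure volume U := by rw [hgibbs, hZ, gibbsMeasure]
  subst hgibbs
  have : IsProbabilityMeasure (gibbsMeasure volume U) := isProbabilityMeasure_gibbsMeasure hZint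
  have hpenalty_L2 : MemLp (fun x => α / 2 * ‖x‖ ^ 2) 2 (gibbsMeasure volume U) := by
    refine (memLp_two_iff_integrable_sq (by fun_prop)).2
      ((hm4.const_mul (α ^ 2 / 4)).congr (ae_of_all _ fun x => ?_))
    ring
  have hratio : Zα / Z = ∫ x, exp (-(α / 2 * ‖x‖ ^ 2)) ∂gibbsMeasure volume U := by
    simp_rw [integral_gibbsMeasure hZint.aemeasurable, ← exp_add, ← neg_add, hZ, hZα]
    exact div_eq_inv_mul _ _
  calc ∫ x, (log (Zα / Z) + α / 2 * ‖x‖ ^ 2) ∂gibbsMeasure volume U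
      = log (∫ x, exp (-(α / 2 * ‖x‖ ^ 2)) ∂gibbsMeasure volume U)
          + ∫ x, α / 2 * ‖x‖ ^ 2 ∂gibbsMeasure volume U := by
        rw [integral_add (integrable_const _) (hpenalty_L2.integrable one_le_two), integral_const,
          probReal_univ, one_smul, hratio]
    _ ≤ ∫ x, (α / 2 * ‖x‖ ^ 2) ^ 2 / 2 ∂gibbsMeasure volume U :=
        log_integral_exp_neg_add_integral_le (fun x => by positivity) hpenalty_L2
    _ = α ^ 2 / 8 * ∫ x, ‖x‖ ^ 4 ∂gibbsMeasure volume U := by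
        rw [← integral_const_mul]
        congr 1 with x
        ring

/-- The Kullback–Leibler divergence between the Gibbs measure `π ∝ e^{-U}dλ` and the
penalized Gibbs measure `π_α ∝ e^{-U_α}dλ`, where `U_α(x) = U(x) + (α/2)|x|²`, is bounded
by `(α²/8)·E_π[|x|⁴]`.  Here `dπ/dπ_α(x) = (Z_α/Z)·exp((α/2)|x|²)`, so
`D_KL(π|π_α) = ∫ (log(Z_α/Z) + (α/2)|x|²) dπ`. -/
theorem kl_penalized_gibbs_le
    (d : ℕ) (hd : 1 ≤ d) (U : EuclideanSpace ℝ (Fin d) → ℝ)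
    (hU : ContDiff ℝ 2 U) (hconv : ConvexOn ℝ Set.univ U)
    (α : ℝ) (hα : 0 ≤ α)
    (Z Zα : ℝ)
    (hZ : Z = ∫ x, Real.exp (-U x))
    (hZα : Zα = ∫ x, Real.exp (-(U x + α / 2 * ‖x‖ ^ 2)))
    (hZint : Integrable (fun x => Real.exp (-U x)))
    (hZαint : Integrable (fun x => Real.exp (-(U x + α / 2 * ‖x‖ ^ 2))))
    (gibbs : Measure (EuclideanSpace ℝ (Fin d)))
    (hgibbs : gibbs = (ENNReal.ofReal Z)⁻¹ •
      (volume.withDensity fun x => ENNReal.ofReal (Real.exp (-U x))))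
    (hm4 : Integrable (fun x => ‖x‖ ^ 4) gibbs) :
    ∫ x, (Real.log (Zα / Z) + α / 2 * ‖x‖ ^ 2) ∂gibbs ≤ α ^ 2 / 8 * ∫ x, ‖x‖ ^ 4 ∂gibbs :=
  kl_penalized_gibbs_le_general d U α hα Z Zα hZ hZα hZint gibbs hgibbs hm4
end

section
/- Let U : ℝ^d → ℝ be a C² convex function whose gradient ∇U is Lipschitz, and suppose there exist constants c̲ > 0 and r ∈ [0,1) such that for all x, the smallest eigenvalue of the Hessian satisfies λ_min(D²U(x)) ≥ c̲ · U(x)^{-r}, with U positive and minimized at a unique point x* with U(x*) = 1. Then for all x ∈ ℝ^d, |∇U(x)|² ≥ (2c̲/(1-r)) · (U(x)^{1-r} − U(x*)^{1-r}). -/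
/-!
Restrict `U` to the segment `γ t = x* + t • v`, `v = x - x*`, and put `f = U ∘ γ`, `g = f'`.
The Hessian bound says `g' ≥ c ‖v‖² f^(-r) ≥ 0`, so `g ≥ 0` on `[0, 1]` because `g 0 = 0` at the
minimizer. Hence `Φ = g² - (2 c ‖v‖² / (1 - r)) f^(1-r)` has `Φ' = 2 g (g' - c ‖v‖² f^(-r)) ≥ 0`,
and `Φ 0 ≤ Φ 1` together with Cauchy–Schwarz `g 1 ≤ ‖v‖ ‖∇U x‖` gives the bound.
-/

open scoped RealInnerProductSpace

theorem rpow_sub_rpow_le_sq_of_hasDerivAt {f g g' : ℝ → ℝ} {κ r a b : ℝ} (hab : a ≤ b)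
    (hκ : 0 ≤ κ) (hr : r ≠ 1) (hf : ∀ t, HasDerivAt f (g t) t) (hg : ∀ t, HasDerivAt g (g' t) t)
    (hfpos : ∀ t, 0 < f t) (hga : g a = 0) (hg' : ∀ t, κ * f t ^ (-r) ≤ g' t) :
    2 * κ / (1 - r) * (f b ^ (1 - r) - f a ^ (1 - r)) ≤ g b ^ 2 := by
  have hg_mono : Monotone g := monotone_of_hasDerivAt_nonneg hg fun t =>
    (mul_nonneg hκ (Real.rpow_nonneg (hfpos t).le _)).trans (hg' t)
  set K := 2 * κ / (1 - r)
  have hK : K * (1 - r) = 2 * κ := div_mul_cancel₀ _ (sub_ne_zero.mpr hr.symm)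
  let Φ t := g t ^ 2 - K * f t ^ (1 - r)
  have hΦ : ∀ t, HasDerivAt Φ (2 * g t * (g' t - κ * f t ^ (-r))) t := fun t => by
    have hpow := (hf t).rpow_const (p := 1 - r) (.inl (hfpos t).ne')
    refine (((hg t).pow 2).sub (hpow.const_mul K)).congr_deriv ?_
    rw [show 1 - r - 1 = -r by ring]
    linear_combination -(g t * f t ^ (-r)) * hK
  have hΦ_mono : MonotoneOn Φ (Set.Icc a b) := by
    refine monotoneOn_of_hasDerivWithinAt_nonneg (convex_Icc a b)
      (fun t _ => (hΦ t).continuousAt.continuousWithinAt) (fun t _ => (hΦ t).hasDerivWithinAt)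
      fun t ht => ?_
    rw [interior_Icc] at ht
    have hgt : 0 ≤ g t := hga ▸ hg_mono ht.1.le
    exact mul_nonneg (by positivity) (sub_nonneg.mpr (hg' t))
  have := hΦ_mono ⟨le_rfl, hab⟩ ⟨hab, le_rfl⟩ hab
  simp only [Φ, hga] at this
  linarith

theorem HasFDerivAt.hasDerivAt_comp_add_smul {E F : Type*} [NormedAddCommGroup E]
    [NormedSpace ℝ E] [NormedAddCommGroup F] [NormedSpace ℝ F] {φ : E → F} {φ' : E →L[ℝ] F}
    {x₀ v : E} {t : ℝ} (h : HasFDerivAt φ φ' (x₀ + t • v)) :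
    HasDerivAt (fun s : ℝ => φ (x₀ + s • v)) (φ' v) t := by
  have hline : HasDerivAt (fun s : ℝ => x₀ + s • v) v t := by
    simpa using ((hasDerivAt_id t).smul_const v).const_add x₀
  exact h.comp_hasDerivAt t hline

section Gradient

variable {E : Type*} [NormedAddCommGroup E] [InnerProductSpace ℝ E] [CompleteSpace E]
  {U : E → ℝ}

theorem ContDiff.differentiable_gradient (hU : ContDiff ℝ 2 U) :
    Differentiable ℝ (gradient U) :=
  ((InnerProductSpace.toDual ℝ E).symm.contDiff.comp
    (hU.fderiv_right (m := 1) (by norm_num))).differentiable one_ne_zero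

theorem IsLocalMin.gradient_eq_zero {x : E} (h : IsLocalMin U x) : gradient U x = 0 := by
  simp [gradient, h.fderiv_eq_zero]

theorem mul_rpow_sub_rpow_le_inner_gradient_sq (hU : ContDiff ℝ 2 U) (hUpos : ∀ x, 0 < U x)
    {c r : ℝ} (hc : 0 ≤ c) (hr : r ≠ 1)
    (hHess : ∀ x v, c * U x ^ (-r) * ‖v‖ ^ 2 ≤ ⟪v, fderiv ℝ (gradient U) x v⟫)
    {x₀ : E} (h₀ : gradient U x₀ = 0) (x : E) :
    2 * (c * ‖x - x₀‖ ^ 2) / (1 - r) * (U x ^ (1 - r) - U x₀ ^ (1 - r)) ≤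
      ⟪x - x₀, gradient U x⟫ ^ 2 := by
  set v := x - x₀
  have hf : ∀ t : ℝ, HasDerivAt (fun s => U (x₀ + s • v)) ⟪v, gradient U (x₀ + t • v)⟫ t :=
    fun t => real_inner_comm v _ ▸
      (hU.differentiable two_ne_zero _).hasGradientAt.hasFDerivAt.hasDerivAt_comp_add_smul
  have hg : ∀ t : ℝ, HasDerivAt (fun s => ⟪v, gradient U (x₀ + s • v)⟫)
      ⟪v, fderiv ℝ (gradient U) (x₀ + t • v) v⟫ t := fun t => by
    simpa using (hasDerivAt_const t v).inner ℝ
      (hU.differentiable_gradient _).hasFDerivAt.hasDerivAt_comp_add_smul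
  have := rpow_sub_rpow_le_sq_of_hasDerivAt (κ := c * ‖v‖ ^ 2) zero_le_one (by positivity) hr
    hf hg (fun t => hUpos _) (by simp [h₀]) fun t => by
      rw [mul_right_comm]; exact hHess _ v
  simpa only [zero_smul, add_zero, one_smul, v, add_sub_cancel] using this

end Gradient

theorem grad_sq_lower_bound_general
    {d : ℕ} (U : EuclideanSpace ℝ (Fin d) → ℝ)
    (hU : ContDiff ℝ 2 U) (hUpos : ∀ x, 0 < U x)
    (xstar : EuclideanSpace ℝ (Fin d))
    (hmin : ∀ x, U xstar ≤ U x)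
    (c r : ℝ) (hc : 0 < c) (hr1 : r < 1)
    (hHess : ∀ x v, c * U x ^ (-r) * ‖v‖ ^ 2 ≤ ⟪v, fderiv ℝ (gradient U) x v⟫) :
    ∀ x, 2 * c / (1 - r) * (U x ^ (1 - r) - U xstar ^ (1 - r)) ≤ ‖gradient U x‖ ^ 2 := by
  intro x
  rcases eq_or_ne x xstar with rfl | hx
  · simp
  have hv : 0 < ‖x - xstar‖ ^ 2 := by positivity [sub_ne_zero.mpr hx]
  have hbound := mul_rpow_sub_rpow_le_inner_gradient_sq hU hUpos hc.le hr1.ne hHess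
    (IsLocalMin.gradient_eq_zero (.of_forall hmin)) x
  have hCS : ⟪x - xstar, gradient U x⟫ ^ 2 ≤ ‖x - xstar‖ ^ 2 * ‖gradient U x‖ ^ 2 := by
    rw [← mul_pow]; exact sq_le_sq' (neg_le_of_abs_le (abs_real_inner_le_norm _ _))
      (le_of_abs_le (abs_real_inner_le_norm _ _))
  refine le_of_mul_le_mul_left ?_ hv
  calc ‖x - xstar‖ ^ 2 * (2 * c / (1 - r) * (U x ^ (1 - r) - U xstar ^ (1 - r)))
      = 2 * (c * ‖x - xstar‖ ^ 2) / (1 - r) * (U x ^ (1 - r) - U xstar ^ (1 - r)) := by ring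
    _ ≤ ‖x - xstar‖ ^ 2 * ‖gradient U x‖ ^ 2 := hbound.trans hCS

/-- Under the weakly convex parametric assumption `(H_r^1)` — `U` is `C²`, positive,
convex, with `L`-Lipschitz gradient, unique minimizer `x*` with `U(x*) = 1`, and
`λ_min(D²U(x)) ≥ c̲·U(x)^{-r}` — one has
`|∇U(x)|² ≥ (2c̲/(1-r))·(U(x)^{1-r} − U(x*)^{1-r})` for all `x`. -/
theorem grad_sq_lower_bound
    {d : ℕ} (hd : 1 ≤ d) (U : EuclideanSpace ℝ (Fin d) → ℝ)
    (hU : ContDiff ℝ 2 U) (hUpos : ∀ x, 0 < U x)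
    (hconv : ConvexOn ℝ Set.univ U)
    (L : ℝ) (hL : 0 < L) (hLip : LipschitzWith (Real.toNNReal L) (gradient U))
    (xstar : EuclideanSpace ℝ (Fin d))
    (hmin : ∀ x, U xstar ≤ U x)
    (hminUnique : ∀ x, U x = U xstar → x = xstar)
    (hstar : U xstar = 1)
    (c r : ℝ) (hc : 0 < c) (hr0 : 0 ≤ r) (hr1 : r < 1)
    (hHess : ∀ x v, c * U x ^ (-r) * ‖v‖ ^ 2 ≤ ⟪v, fderiv ℝ (gradient U) x v⟫) :
    ∀ x, 2 * c / (1 - r) * (U x ^ (1 - r) - U xstar ^ (1 - r)) ≤ ‖gradient U x‖ ^ 2 :=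
  grad_sq_lower_bound_general U hU hUpos xstar hmin c r hc hr1 hHess
end

section
/- Let V be a nonnegative random variable satisfying E[e^{θV}] < e^a + ρ e^b for some positive constants θ, a, ρ, b with ρ ≥ 1. Then for any p ≥ 1, E[V^p] ≤ θ^{-p} (p − 1 + a + b + log(2ρ))^p. -/
/-!
The map `x ↦ (log x) ^ p` is concave on `[exp (p - 1), ∞)`: its derivative is `p * g (log x)` with
`g t = t ^ (p - 1) * exp (-t)`, which decreases for `t ≥ p - 1`. Jensen's inequality for the
variable `exp (p - 1 + θ V)`, which lives there, gives
`θ ^ p E[V ^ p] ≤ E[(p - 1 + θ V) ^ p] ≤ (p - 1 + log E[exp (θ V)]) ^ p`, and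
`log (exp a + ρ exp b) ≤ a + b + log (2 ρ)` because both summands are at most `ρ exp (a + b)`.
-/

open MeasureTheory Real Set

theorem antitoneOn_rpow_mul_exp_neg {q : ℝ} (hq : 0 ≤ q) :
    AntitoneOn (fun t : ℝ => t ^ q * exp (-t)) (Ici q) := by
  have hderiv : ∀ t : ℝ, 0 < t →
      HasDerivAt (fun t : ℝ => t ^ q * exp (-t)) (t ^ (q - 1) * exp (-t) * (q - t)) t := by
    intro t ht
    refine ((hasDerivAt_rpow_const (p := q) (Or.inl ht.ne')).mul
      (hasDerivAt_neg t).exp).congr_deriv ?_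
    rw [show t ^ q = t ^ (q - 1) * t by rw [← rpow_add_one ht.ne']; ring_nf]
    ring
  apply antitoneOn_of_deriv_nonpos (convex_Ici q)
  · exact fun t _ => ((continuousAt_rpow_const t q (Or.inr hq)).mul
      (continuous_exp.comp continuous_neg).continuousAt).continuousWithinAt
  · rw [interior_Ici]
    exact fun t ht => (hderiv t (hq.trans_lt ht)).differentiableAt.differentiableWithinAt
  · rw [interior_Ici]
    intro t ht
    have ht0 : 0 < t := hq.trans_lt ht
    rw [(hderiv t ht0).deriv]
    exact mul_nonpos_of_nonneg_of_nonpos (by positivity) (by linarith [mem_Ioi.mp ht])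

theorem continuousOn_log_rpow {p : ℝ} (hp : 0 ≤ p) :
    ContinuousOn (fun x => log x ^ p) {0}ᶜ :=
  continuousOn_log.rpow_const fun _ _ => Or.inr hp

theorem concaveOn_log_rpow {p : ℝ} (hp : 1 ≤ p) :
    ConcaveOn ℝ (Ici (exp (p - 1))) (fun x => log x ^ p) := by
  have hderiv : ∀ x : ℝ, 1 < x →
      HasDerivAt (fun x => log x ^ p) (p * (log x ^ (p - 1) * exp (-log x))) x := by
    intro x hx
    refine ((hasDerivAt_log (by linarith)).rpow_const (Or.inr hp)).congr_deriv ?_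
    rw [exp_neg, exp_log (by linarith)]
    ring
  have hone : ∀ x ∈ interior (Ici (exp (p - 1))), 1 < x := by
    rw [interior_Ici]
    exact fun x hx => (one_le_exp (by linarith)).trans_lt hx
  apply AntitoneOn.concaveOn_of_deriv (convex_Ici _)
  · exact (continuousOn_log_rpow (by linarith)).mono fun x hx => ((exp_pos _).trans_le hx).ne'
  · exact fun x hx => (hderiv x (hone x hx)).differentiableAt.differentiableWithinAt
  · intro x hx y hy hxy
    rw [(hderiv x (hone x hx)).deriv, (hderiv y (hone y hy)).deriv]
    have hlog : ∀ z ∈ interior (Ici (exp (p - 1))), log z ∈ Ici (p - 1) := by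
      rw [interior_Ici]
      exact fun z hz => le_log_iff_exp_le ((exp_pos _).trans hz) |>.mpr hz.le
    exact mul_le_mul_of_nonneg_left (antitoneOn_rpow_mul_exp_neg (by linarith)
      (hlog x hx) (hlog y hy) (log_le_log (by linarith [hone x hx]) hxy)) (by linarith)

theorem log_exp_add_mul_exp_le {a b ρ : ℝ} (ha : 0 ≤ a) (hb : 0 ≤ b) (hρ : 1 ≤ ρ) :
    log (exp a + ρ * exp b) ≤ a + b + log (2 * ρ) := by
  have h₁ : exp a ≤ ρ * exp (a + b) := by
    rw [← one_mul (exp a)]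
    exact mul_le_mul hρ (exp_le_exp.mpr (by linarith)) (exp_pos a).le (by linarith)
  have h₂ : ρ * exp b ≤ ρ * exp (a + b) := by gcongr; linarith
  calc log (exp a + ρ * exp b) ≤ log (2 * ρ * exp (a + b)) :=
        log_le_log (by positivity) (by linarith)
    _ = a + b + log (2 * ρ) := by
        rw [log_mul (by positivity) (exp_pos _).ne', log_exp]; ring

theorem MeasureTheory.Integrable.const_add_rpow {Ω : Type*} [MeasurableSpace Ω] {μ : Measure Ω}
    [IsFiniteMeasure μ] {f : Ω → ℝ} (hf : AEStronglyMeasurable f μ) (hf0 : ∀ ω, 0 ≤ f ω)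
    {p : ℝ} (hp : 0 < p) (hfp : Integrable (fun ω => f ω ^ p) μ) {c : ℝ} (hc : 0 ≤ c) :
    Integrable (fun ω => (c + f ω) ^ p) μ := by
  have hp' : ENNReal.ofReal p ≠ 0 := by simpa using hp
  have hmem : MemLp f (ENNReal.ofReal p) μ := by
    rw [← integrable_norm_rpow_iff hf hp' ENNReal.ofReal_ne_top, ENNReal.toReal_ofReal hp.le]
    refine hfp.congr (.of_forall fun ω => ?_)
    simp only [Real.norm_of_nonneg (hf0 ω)]
  refine ((memLp_const c).add hmem).integrable_norm_rpow hp' ENNReal.ofReal_ne_top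
    |>.congr (.of_forall fun ω => ?_)
  simp only [ENNReal.toReal_ofReal hp.le, Pi.add_apply,
    Real.norm_of_nonneg (add_nonneg hc (hf0 ω))]

section

variable {Ω : Type*} [MeasurableSpace Ω] {μ : Measure Ω} [IsProbabilityMeasure μ]

theorem one_le_integral_exp {X : Ω → ℝ} (hX0 : ∀ ω, 0 ≤ X ω)
    (hexp : Integrable (fun ω => exp (X ω)) μ) : 1 ≤ ∫ ω, exp (X ω) ∂μ := by
  simpa using integral_mono (integrable_const 1) hexp fun ω => one_le_exp (hX0 ω)

theorem integral_rpow_le_sub_one_add_log_integral_exp {X : Ω → ℝ}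
    (hX : AEStronglyMeasurable X μ) (hX0 : ∀ ω, 0 ≤ X ω)
    (hexp : Integrable (fun ω => exp (X ω)) μ) {p : ℝ} (hp : 1 ≤ p)
    (hXp : Integrable (fun ω => X ω ^ p) μ) :
    ∫ ω, X ω ^ p ∂μ ≤ (p - 1 + log (∫ ω, exp (X ω) ∂μ)) ^ p := by
  have hshift : Integrable (fun ω => (p - 1 + X ω) ^ p) μ :=
    hXp.const_add_rpow hX hX0 (by linarith) (by linarith)
  calc ∫ ω, X ω ^ p ∂μ ≤ ∫ ω, (p - 1 + X ω) ^ p ∂μ :=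
        integral_mono hXp hshift fun ω => rpow_le_rpow (hX0 ω) (by linarith) (by linarith)
    _ = ∫ ω, log (exp (p - 1 + X ω)) ^ p ∂μ := by simp only [log_exp]
    _ ≤ log (∫ ω, exp (p - 1 + X ω) ∂μ) ^ p := by
        refine (concaveOn_log_rpow hp).le_map_integral ?_ isClosed_Ici
          (.of_forall fun ω => exp_le_exp.mpr (by linarith [hX0 ω])) ?_ ?_
        · exact (continuousOn_log_rpow (by linarith)).mono
            fun x hx => ((exp_pos _).trans_le hx).ne'
        · simpa only [exp_add] using hexp.const_mul (exp (p - 1))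
        · simpa only [Function.comp_def, log_exp] using hshift
    _ = (p - 1 + log (∫ ω, exp (X ω) ∂μ)) ^ p := by
        simp only [exp_add, integral_const_mul]
        rw [log_mul (exp_pos _).ne' (by linarith [one_le_integral_exp hX0 hexp]), log_exp]

end

theorem moment_bound_from_exponential_moment
    {Ω : Type*} [MeasurableSpace Ω] (μ : Measure Ω) [IsProbabilityMeasure μ]
    (V : Ω → ℝ) (hVmeas : Measurable V) (hVnonneg : ∀ ω, 0 ≤ V ω)
    (θ a ρ b : ℝ) (hθ : 0 < θ) (ha : 0 < a) (hb : 0 < b) (hρ : 1 ≤ ρ)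
    (hexpInt : Integrable (fun ω => Real.exp (θ * V ω)) μ)
    (hexp : ∫ ω, Real.exp (θ * V ω) ∂μ < Real.exp a + ρ * Real.exp b)
    (p : ℝ) (hp : 1 ≤ p)
    (hpInt : Integrable (fun ω => V ω ^ p) μ) :
    ∫ ω, V ω ^ p ∂μ ≤ θ ^ (-p) * (p - 1 + a + b + Real.log (2 * ρ)) ^ p := by
  have hθV : ∀ ω, 0 ≤ θ * V ω := fun ω => mul_nonneg hθ.le (hVnonneg ω)
  have hscale : ∀ ω, (θ * V ω) ^ p = θ ^ p * V ω ^ p := fun ω => mul_rpow hθ.le (hVnonneg ω)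
  have hmoment := integral_rpow_le_sub_one_add_log_integral_exp
    (hVmeas.const_mul θ).aestronglyMeasurable hθV hexpInt hp
    (by simpa only [hscale] using hpInt.const_mul (θ ^ p))
  have hone := one_le_integral_exp hθV hexpInt
  have hlog : log (∫ ω, exp (θ * V ω) ∂μ) ≤ a + b + log (2 * ρ) :=
    (log_le_log (by linarith) hexp.le).trans (log_exp_add_mul_exp_le ha.le hb.le hρ)
  calc ∫ ω, V ω ^ p ∂μ = θ ^ (-p) * ∫ ω, (θ * V ω) ^ p ∂μ := by
        rw [integral_congr_ae (.of_forall hscale), integral_const_mul, ← mul_assoc,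
          ← rpow_add hθ, neg_add_cancel, rpow_zero, one_mul]
    _ ≤ θ ^ (-p) * (p - 1 + log (∫ ω, exp (θ * V ω) ∂μ)) ^ p := by gcongr
    _ ≤ θ ^ (-p) * (p - 1 + a + b + log (2 * ρ)) ^ p := by
        have hlog_nonneg := log_nonneg hone
        gcongr θ ^ (-p) * ?_ ^ p
        linarith
end

section
/- Let U : ℝ^d → ℝ be C² and convex with λ_min(D²U(x)) ≥ 0 for all x, and step γ ∈ (0, 1/L] where ∇U is L-Lipschitz. For the coupled Euler schemes X̄^x_{nγ}, X̄^y_{nγ} driven by the same Gaussian innovations and started at x, y, one has the pointwise bound |X̄^x_{nγ} − X̄^y_{nγ}|² ≤ |x − y|² ∫_0^1 exp( −2γ Σ_{i=0}^{n-1} λ_min( D²U( X̄^{λx + (1−λ)y}_{iγ} ) ) ) dλ. -/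
/-!
Differentiating the scheme along the segment `l ↦ l • x + (1 - l) • y` gives the tangent
recursion `Dₙ₊₁ = (Id - γ H(Xₙ)) Dₙ` with `D₀ = x - y`. The Hessian `H` is symmetric with
Rayleigh quotients in `[λ_min, L]`, and `γ L ≤ 1`, so each factor has operator norm at most
`1 - γ λ_min ≤ exp (-γ λ_min)`. The fundamental theorem of calculus in `l` and Jensen's
inequality on `[0, 1]` turn this pathwise bound on `Dₙ` into the bound on `|X̄ˣₙ - X̄ʸₙ|²`.
-/

open Real
open scoped NNReal RealInnerProductSpace

open Set MeasureTheory Finset InnerProductSpace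

section Operators

variable {E : Type*} [NormedAddCommGroup E] [InnerProductSpace ℝ E]

theorem ContinuousLinearMap.norm_apply_le_of_abs_inner_le {T : E →L[ℝ] E}
    (hT : (T : E →ₗ[ℝ] E).IsSymmetric) {c : ℝ} (h : ∀ v, |⟪T v, v⟫| ≤ c * ‖v‖ ^ 2) (v : E) :
    ‖T v‖ ≤ c * ‖v‖ := by
  rcases eq_or_ne v 0 with rfl | hv
  · simp
  have hc : 0 ≤ c := nonneg_of_mul_nonneg_left ((abs_nonneg _).trans (h v)) (by positivity)
  have hnorm : ‖T‖ ≤ c := by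
    rw [T.norm_eq_iSup_rayleighQuotient hT]
    refine ciSup_le fun x => ?_
    rcases eq_or_ne x 0 with rfl | hx
    · simpa using hc
    rw [rayleighQuotient, reApplyInnerSelf_apply, RCLike.re_to_real, abs_div, abs_sq,
      div_le_iff₀ (by positivity)]
    exact h x
  exact (T.le_opNorm v).trans (mul_le_mul_of_nonneg_right hnorm (norm_nonneg v))

theorem ContinuousLinearMap.norm_sub_smul_apply_le {T : E →L[ℝ] E}
    (hT : (T : E →ₗ[ℝ] E).IsSymmetric) {μ L γ : ℝ} (hμ : ∀ v, μ * ‖v‖ ^ 2 ≤ ⟪v, T v⟫)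
    (hL : ‖T‖ ≤ L) (hγ : 0 ≤ γ) (hγL : γ * L ≤ 1) (w : E) :
    ‖w - γ • T w‖ ≤ (1 - γ * μ) * ‖w‖ := by
  have hA : ((ContinuousLinearMap.id ℝ E - γ • T : E →L[ℝ] E) : E →ₗ[ℝ] E).IsSymmetric :=
    LinearMap.IsSymmetric.id.sub (hT.smul (by simp))
  refine (ContinuousLinearMap.id ℝ E - γ • T).norm_apply_le_of_abs_inner_le hA (fun v => ?_) w
  have hquad : ⟪(ContinuousLinearMap.id ℝ E - γ • T) v, v⟫ = ‖v‖ ^ 2 - γ * ⟪v, T v⟫ := by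
    simp [inner_sub_left, real_inner_smul_right, real_inner_comm]
  have hupper : ⟪v, T v⟫ ≤ L * ‖v‖ ^ 2 := calc
    ⟪v, T v⟫ ≤ ‖v‖ * (‖T‖ * ‖v‖) := (real_inner_le_norm _ _).trans (by gcongr; exact T.le_opNorm v)
    _ ≤ L * ‖v‖ ^ 2 := by nlinarith [norm_nonneg v]
  rw [hquad, abs_le]
  constructor <;> nlinarith [hμ v, sq_nonneg ‖v‖, mul_le_mul_of_nonneg_left hupper hγ]

end Operators

section Gradient

variable {E : Type*} [NormedAddCommGroup E] [InnerProductSpace ℝ E] [CompleteSpace E]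
  {U : E → ℝ}

theorem ContDiff.gradient_right {m n : WithTop ℕ∞} (hU : ContDiff ℝ n U) (hmn : m + 1 ≤ n) :
    ContDiff ℝ m (gradient U) :=
  (toDual ℝ E).symm.contDiff.comp (hU.fderiv_right hmn)

theorem isSymmetric_of_hasFDerivAt_gradient {z : E} (hU : ContDiffAt ℝ 2 U z) {H : E →L[ℝ] E}
    (hH : HasFDerivAt (gradient U) H z) : (H : E →ₗ[ℝ] E).IsSymmetric := by
  have hD : HasFDerivAt (gradient U)
      ((toDual ℝ E).symm.toContinuousLinearEquiv.toContinuousLinearMap.comp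
        (fderiv ℝ (fderiv ℝ U) z)) z :=
    (toDual ℝ E).symm.toContinuousLinearEquiv.hasFDerivAt.comp z
      ((hU.fderiv_right (m := 1) le_rfl).differentiableAt one_ne_zero).hasFDerivAt
  have hsymm := hU.isSymmSndFDerivAt (n := 2) (by norm_num)
  intro u v
  rw [ContinuousLinearMap.coe_coe, hH.unique hD, ← real_inner_comm u]
  simp only [ContinuousLinearMap.coe_comp, Function.comp_apply,
    ContinuousLinearEquiv.coe_coe, LinearIsometryEquiv.coe_toContinuousLinearEquiv,
    toDual_symm_apply, hsymm u v]

theorem norm_sub_smul_hessian_apply_le {z : E} (hU : ContDiffAt ℝ 2 U z) {L : ℝ≥0}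
    (hLip : LipschitzWith L (gradient U)) {H : E →L[ℝ] E} (hH : HasFDerivAt (gradient U) H z)
    {μ γ : ℝ} (hμ : ∀ v, μ * ‖v‖ ^ 2 ≤ ⟪v, H v⟫) (hγ : 0 ≤ γ) (hγL : γ * L ≤ 1) (w : E) :
    ‖w - γ • H w‖ ≤ (1 - γ * μ) * ‖w‖ :=
  H.norm_sub_smul_apply_le (isSymmetric_of_hasFDerivAt_gradient hU hH) hμ
    (hH.le_of_lipschitz hLip) hγ hγL w

end Gradient

section RayleighLowerBound

variable {α E : Type*} [TopologicalSpace α] [NormedAddCommGroup E] [InnerProductSpace ℝ E]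

theorem le_add_norm_sub_of_isGreatest_inner {A B : E →L[ℝ] E} {a b : ℝ}
    (ha : IsGreatest {t : ℝ | ∀ v, t * ‖v‖ ^ 2 ≤ ⟪v, A v⟫} a)
    (hb : IsGreatest {t : ℝ | ∀ v, t * ‖v‖ ^ 2 ≤ ⟪v, B v⟫} b) : a ≤ b + ‖A - B‖ := by
  suffices a - ‖A - B‖ ≤ b by linarith
  refine hb.2 fun v => ?_
  have hdiff : ⟪v, A v⟫ - ⟪v, B v⟫ ≤ ‖A - B‖ * ‖v‖ ^ 2 := calc
    ⟪v, A v⟫ - ⟪v, B v⟫ = ⟪v, (A - B) v⟫ := by simp [inner_sub_right]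
    _ ≤ ‖v‖ * (‖A - B‖ * ‖v‖) :=
      (real_inner_le_norm _ _).trans (by gcongr; exact (A - B).le_opNorm v)
    _ = ‖A - B‖ * ‖v‖ ^ 2 := by ring
  nlinarith [ha.1 v]

theorem continuous_of_isGreatest_inner {H : α → E →L[ℝ] E} (hH : Continuous H) {lam : α → ℝ}
    (hlam : ∀ z, IsGreatest {t : ℝ | ∀ v, t * ‖v‖ ^ 2 ≤ ⟪v, H z v⟫} (lam z)) :
    Continuous lam := by
  refine continuous_iff_continuousAt.2 fun z => tendsto_iff_norm_sub_tendsto_zero.2 ?_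
  refine squeeze_zero (fun _ => norm_nonneg _) (fun w => ?_)
    (tendsto_iff_norm_sub_tendsto_zero.1 (hH.tendsto z))
  rw [Real.norm_eq_abs, abs_sub_le_iff]
  exact ⟨by linarith [le_add_norm_sub_of_isGreatest_inner (hlam w) (hlam z)],
    by linarith [le_add_norm_sub_of_isGreatest_inner (hlam z) (hlam w), norm_sub_rev (H w) (H z)]⟩

end RayleighLowerBound

section Integral

theorem sq_intervalIntegral_le_intervalIntegral_sq {f : ℝ → ℝ}
    (hf : IntervalIntegrable f volume 0 1)
    (hf2 : IntervalIntegrable (fun x => f x ^ 2) volume 0 1) :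
    (∫ x in (0:ℝ)..1, f x) ^ 2 ≤ ∫ x in (0:ℝ)..1, f x ^ 2 := by
  have hvol : volume (Ioc (0:ℝ) 1) = 1 := by simp
  have := (even_two.convexOn_pow (𝕜 := ℝ)).map_set_average_le
    (continuous_pow 2).continuousOn isClosed_univ (by simp [hvol]) (by simp [hvol])
    (by simp) hf.1 hf2.1
  simpa [setAverage_eq, hvol, intervalIntegral.integral_of_le zero_le_one] using this

theorem sq_norm_sub_le_intervalIntegral_sq {E : Type*} [NormedAddCommGroup E] [NormedSpace ℝ E]
    [CompleteSpace E] {f : ℝ → E} (hf : ContDiff ℝ 1 f) {g : ℝ → ℝ} (hg : Continuous g)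
    (hfg : ∀ t ∈ Icc (0:ℝ) 1, ‖deriv f t‖ ≤ g t) :
    ‖f 1 - f 0‖ ^ 2 ≤ ∫ t in (0:ℝ)..1, g t ^ 2 := by
  have hftc : ∫ t in (0:ℝ)..1, deriv f t = f 1 - f 0 :=
    intervalIntegral.integral_deriv_eq_sub (fun t _ => hf.differentiable one_ne_zero t)
      ((hf.continuous_deriv le_rfl).intervalIntegrable _ _)
  have hnorm : ‖f 1 - f 0‖ ≤ ∫ t in (0:ℝ)..1, g t := by
    rw [← hftc]
    exact intervalIntegral.norm_integral_le_of_norm_le zero_le_one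
      (.of_forall fun t ht => hfg t (Ioc_subset_Icc_self ht)) (hg.intervalIntegrable _ _)
  calc ‖f 1 - f 0‖ ^ 2 ≤ (∫ t in (0:ℝ)..1, g t) ^ 2 := pow_le_pow_left₀ (norm_nonneg _) hnorm 2
    _ ≤ ∫ t in (0:ℝ)..1, g t ^ 2 := sq_intervalIntegral_le_intervalIntegral_sq
      (hg.intervalIntegrable _ _) ((hg.pow 2).intervalIntegrable _ _)

end Integral

section EulerScheme

variable {E : Type*} [NormedAddCommGroup E] [NormedSpace ℝ E]
  {G : E → E} {γ : ℝ} {ξ : ℕ → E} {X : E → ℕ → E}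

theorem contDiff_euler (hG : ContDiff ℝ 1 G) (h0 : ∀ x, X x 0 = x)
    (hrec : ∀ x n, X x (n + 1) = X x n - γ • G (X x n) + ξ n) (n : ℕ) :
    ContDiff ℝ 1 (fun x => X x n) := by
  induction n with
  | zero => simpa only [h0] using contDiff_fun_id
  | succ n ih =>
    simp only [hrec]
    exact (ih.sub ((hG.comp ih).const_smul γ)).add contDiff_const

theorem hasDerivAt_euler_succ {H : E → E →L[ℝ] E} (hG : ∀ z, HasFDerivAt G (H z) z)
    (hrec : ∀ x n, X x (n + 1) = X x n - γ • G (X x n) + ξ n) {c : ℝ → E} {t : ℝ} {n : ℕ}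
    {D : E} (hD : HasDerivAt (fun s => X (c s) n) D t) :
    HasDerivAt (fun s => X (c s) (n + 1)) (D - γ • H (X (c t) n) D) t := by
  simp only [hrec]
  exact (hD.sub (((hG _).comp_hasDerivAt t hD).const_smul γ)).add_const _

theorem exists_hasDerivAt_euler_norm_le {H : E → E →L[ℝ] E} (hG : ∀ z, HasFDerivAt G (H z) z)
    (h0 : ∀ x, X x 0 = x) (hrec : ∀ x n, X x (n + 1) = X x n - γ • G (X x n) + ξ n)
    {μ : E → ℝ} (hstep : ∀ z w, ‖w - γ • H z w‖ ≤ (1 - γ * μ z) * ‖w‖)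
    {c : ℝ → E} {v : E} {t : ℝ} (hc : HasDerivAt c v t) (n : ℕ) :
    ∃ D, HasDerivAt (fun s => X (c s) n) D t ∧
      ‖D‖ ≤ exp (-(γ * ∑ i ∈ range n, μ (X (c t) i))) * ‖v‖ := by
  induction n with
  | zero => exact ⟨v, by simpa only [h0] using hc, by simp⟩
  | succ n ih =>
    obtain ⟨D, hD, hDle⟩ := ih
    refine ⟨_, hasDerivAt_euler_succ hG hrec hD, ?_⟩
    have hexp : 1 - γ * μ (X (c t) n) ≤ exp (-(γ * μ (X (c t) n))) := by
      linarith [add_one_le_exp (-(γ * μ (X (c t) n)))]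
    calc ‖D - γ • H (X (c t) n) D‖ ≤ (1 - γ * μ (X (c t) n)) * ‖D‖ := hstep _ _
      _ ≤ exp (-(γ * μ (X (c t) n))) * (exp (-(γ * ∑ i ∈ range n, μ (X (c t) i))) * ‖v‖) :=
        mul_le_mul hexp hDle (norm_nonneg _) (exp_pos _).le
      _ = exp (-(γ * ∑ i ∈ range (n + 1), μ (X (c t) i))) * ‖v‖ := by
        rw [sum_range_succ, ← mul_assoc, ← exp_add]
        ring_nf

end EulerScheme

theorem euler_synchronous_coupling_confluence_general
    {d : ℕ} (U : EuclideanSpace ℝ (Fin d) → ℝ)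
    (hU : ContDiff ℝ 2 U)
    (L γ σ : ℝ) (hL : 0 < L) (hγ0 : 0 < γ) (hγL : γ ≤ 1 / L)
    (hLip : LipschitzWith (Real.toNNReal L) (gradient U))
    (H : EuclideanSpace ℝ (Fin d) →
      (EuclideanSpace ℝ (Fin d) →L[ℝ] EuclideanSpace ℝ (Fin d)))
    (hH : ∀ z, HasFDerivAt (gradient U) (H z) z)
    (lam : EuclideanSpace ℝ (Fin d) → ℝ)
    (hlam : ∀ z, IsGreatest {t : ℝ | ∀ v, t * ‖v‖ ^ 2 ≤ ⟪v, H z v⟫} (lam z))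
    (Z : ℕ → EuclideanSpace ℝ (Fin d))
    (X : EuclideanSpace ℝ (Fin d) → ℕ → EuclideanSpace ℝ (Fin d))
    (hX0 : ∀ x, X x 0 = x)
    (hXrec : ∀ x n, X x (n + 1) =
      X x n - γ • gradient U (X x n) + (σ * Real.sqrt γ) • Z (n + 1)) :
    ∀ (x y : EuclideanSpace ℝ (Fin d)) (n : ℕ),
      ‖X x n - X y n‖ ^ 2 ≤ ‖x - y‖ ^ 2 *
        ∫ l in (0:ℝ)..1,
          Real.exp (-2 * γ * ∑ i ∈ Finset.range n, lam (X (l • x + (1 - l) • y) i)) := by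
  intro x y n
  have hG : ContDiff ℝ 1 (gradient U) := hU.gradient_right le_rfl
  have hXC : ∀ i, ContDiff ℝ 1 (fun z => X z i) :=
    contDiff_euler (ξ := fun n => (σ * Real.sqrt γ) • Z (n + 1)) hG hX0 hXrec
  have hlamc : Continuous lam := by
    refine continuous_of_isGreatest_inner ?_ hlam
    rw [show H = fderiv ℝ (gradient U) from funext fun z => (hH z).fderiv.symm]
    exact hG.continuous_fderiv one_ne_zero
  have hstep : ∀ z w, ‖w - γ • H z w‖ ≤ (1 - γ * lam z) * ‖w‖ := fun z =>
    norm_sub_smul_hessian_apply_le hU.contDiffAt hLip (hH z) (hlam z).1 hγ0.le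
      (by rwa [Real.coe_toNNReal L hL.le, ← le_div_iff₀ hL])
  have hc : ∀ l : ℝ, HasDerivAt (fun l : ℝ => l • x + (1 - l) • y) (x - y) l := fun l => by
    simpa [sub_eq_add_neg] using ((hasDerivAt_id l).smul_const x).fun_add
      (((hasDerivAt_id l).const_sub 1).smul_const y)
  calc ‖X x n - X y n‖ ^ 2
      = ‖X ((1:ℝ) • x + (1 - 1 : ℝ) • y) n - X ((0:ℝ) • x + (1 - 0 : ℝ) • y) n‖ ^ 2 := by simp
    _ ≤ ∫ l in (0:ℝ)..1,
          (exp (-(γ * ∑ i ∈ range n, lam (X (l • x + (1 - l) • y) i))) * ‖x - y‖) ^ 2 := by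
      refine sq_norm_sub_le_intervalIntegral_sq (f := fun l : ℝ => X (l • x + (1 - l) • y) n)
        (g := fun l => exp (-(γ * ∑ i ∈ range n, lam (X (l • x + (1 - l) • y) i))) * ‖x - y‖)
        ((hXC n).comp (by fun_prop)) (by have := fun i => (hXC i).continuous; fun_prop)
        fun l _ => ?_
      obtain ⟨D, hD, hDle⟩ :=
        exists_hasDerivAt_euler_norm_le (ξ := fun n => (σ * Real.sqrt γ) • Z (n + 1))
          hH hX0 hXrec hstep (hc l) n
      exact hD.deriv ▸ hDle
    _ = ‖x - y‖ ^ 2 * ∫ l in (0:ℝ)..1,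
          exp (-2 * γ * ∑ i ∈ range n, lam (X (l • x + (1 - l) • y) i)) := by
      rw [← intervalIntegral.integral_const_mul]
      congr 1 with l
      rw [mul_pow, ← exp_nat_mul]
      ring_nf

/-- Pathwise confluence bound for synchronously coupled Euler schemes: if `U` is `C²`
convex with `L`-Lipschitz gradient and `γ ∈ (0, 1/L]`, then
`|X̄^x_{nγ} − X̄^y_{nγ}|² ≤ |x−y|² ∫₀¹ exp(−2γ Σ_{i<n} λ_min(D²U(X̄^{λx+(1−λ)y}_{iγ}))) dλ`. -/
theorem euler_synchronous_coupling_confluence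
    {d : ℕ} (hd : 1 ≤ d) (U : EuclideanSpace ℝ (Fin d) → ℝ)
    (hU : ContDiff ℝ 2 U) (hconv : ConvexOn ℝ Set.univ U)
    (L γ σ : ℝ) (hL : 0 < L) (hγ0 : 0 < γ) (hγL : γ ≤ 1 / L) (hσ : 0 < σ)
    (hLip : LipschitzWith (Real.toNNReal L) (gradient U))
    (H : EuclideanSpace ℝ (Fin d) →
      (EuclideanSpace ℝ (Fin d) →L[ℝ] EuclideanSpace ℝ (Fin d)))
    (hH : ∀ z, HasFDerivAt (gradient U) (H z) z)
    (lam : EuclideanSpace ℝ (Fin d) → ℝ)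
    (hlam : ∀ z, IsGreatest {t : ℝ | ∀ v, t * ‖v‖ ^ 2 ≤ ⟪v, H z v⟫} (lam z))
    (hlam_nonneg : ∀ z, 0 ≤ lam z)
    (Z : ℕ → EuclideanSpace ℝ (Fin d))
    (X : EuclideanSpace ℝ (Fin d) → ℕ → EuclideanSpace ℝ (Fin d))
    (hX0 : ∀ x, X x 0 = x)
    (hXrec : ∀ x n, X x (n + 1) =
      X x n - γ • gradient U (X x n) + (σ * Real.sqrt γ) • Z (n + 1)) :
    ∀ (x y : EuclideanSpace ℝ (Fin d)) (n : ℕ),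
      ‖X x n - X y n‖ ^ 2 ≤ ‖x - y‖ ^ 2 *
        ∫ l in (0:ℝ)..1,
          Real.exp (-2 * γ * ∑ i ∈ Finset.range n, lam (X (l • x + (1 - l) • y) i)) :=
  euler_synchronous_coupling_confluence_general U hU L γ σ hL hγ0 hγL hLip H hH lam hlam Z X hX0
    hXrec
end
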